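/- Let A = ℂ[u,v,x_1,...,x_n]/(uv − f(x_1,...,x_n)) where f is a non-constant polynomial, and let 𝔪 be any maximal ideal of A. Then [A/𝔪] = 0 in the Grothendieck group G_0(A). -/

import Mathlib

universe u v

/-! ### The Grothendieck group `G₀` of finitely generated modules -/

/-- A bundled finitely generated module over the commutative ring `R`. -/
structure FGMod (R : Type u) [CommRing R] : Type (u + 1) where
  carrier : Type u
  [isAddCommGroup : AddCommGroup carrier]
  [isModule : Module R carrier]
  [isFinite : Module.Finite R carrier]

attribute [instance] FGMod.isAddCommGroup FGMod.isModule FGMod.isFinite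

/-- The bundled finitely generated module attached to a module. -/
def FGMod.of (R : Type u) [CommRing R] (M : Type u) [AddCommGroup M] [Module R M]
    [Module.Finite R M] : FGMod R :=
  ⟨M⟩

/-- The subgroup of relations coming from short exact sequences
`0 → A → B → C → 0` of finitely generated `R`-modules. -/
def G0Rels (R : Type u) [CommRing R] : AddSubgroup (FreeAbelianGroup (FGMod R)) :=
  AddSubgroup.closure
    { x | ∃ (A B C : FGMod R) (f : A.carrier →ₗ[R] B.carrier) (g : B.carrier →ₗ[R] C.carrier),
        Function.Injective f ∧ Function.Surjective g ∧ LinearMap.range f = LinearMap.ker g ∧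
        x = FreeAbelianGroup.of B - FreeAbelianGroup.of A - FreeAbelianGroup.of C }

/-- The Grothendieck group `G₀(R) = K₀(mod R)` of finitely generated `R`-modules:
the free abelian group on (finitely generated) modules modulo the relation
`[B] = [A] + [C]` for every short exact sequence `0 → A → B → C → 0`. -/
def G0 (R : Type u) [CommRing R] : Type (u + 1) :=
  FreeAbelianGroup (FGMod R) ⧸ G0Rels R

noncomputable instance (R : Type u) [CommRing R] : AddCommGroup (G0 R) :=
  inferInstanceAs (AddCommGroup (FreeAbelianGroup (FGMod R) ⧸ G0Rels R))

/-- The class `[M]` of a finitely generated module in the Grothendieck group `G₀(R)`. -/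
def G0.mk {R : Type u} [CommRing R] (M : FGMod R) : G0 R :=
  QuotientAddGroup.mk (FreeAbelianGroup.of M)

/-- In a module over a noetherian ring, every submodule of a finitely generated module is
finitely generated. -/
instance (R : Type u) [CommRing R] [IsNoetherianRing R] (M : Type u) [AddCommGroup M]
    [Module R M] [Module.Finite R M] (N : Submodule R M) : Module.Finite R ↥N := by
  haveI : IsNoetherian R M := isNoetherian_of_isNoetherianRing_of_finite R M
  exact Module.Finite.iff_fg.mpr (IsNoetherian.noetherian N)

open MvPolynomial

/-- The ideal `(uv - f(x₁,…,xₙ))` of the polynomial ring `ℂ[u,v,x₁,…,xₙ]`. -/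
noncomputable def hyperIdealF (n : ℕ) (f : MvPolynomial (Fin n) ℂ) :
    Ideal (MvPolynomial (Fin 2 ⊕ Fin n) ℂ) :=
  Ideal.span {X (Sum.inl 0) * X (Sum.inl 1) - rename Sum.inr f}

/-- The hypersurface ring `A = ℂ[u,v,x₁,…,xₙ]/(uv - f(x₁,…,xₙ))`. -/
abbrev HyperRingF (n : ℕ) (f : MvPolynomial (Fin n) ℂ) : Type :=
  MvPolynomial (Fin 2 ⊕ Fin n) ℂ ⧸ hyperIdealF n f

/-! A maximal ideal `𝔪` of `A` is a point `(a, b, c)` of the hypersurface `ab = f(c)`, and through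
it runs a polynomial curve `t ↦ w(t)` on the hypersurface along which some coordinate function `y`
restricts to `t`. The curve gives a surjection `φ : A → ℂ[t]` with `𝔪 = φ⁻¹(t)`; hence `𝔭 = ker φ`
is prime, `y ∉ 𝔭` and `𝔭 + (y) = 𝔪`, and the exact sequence `0 → A/𝔭 →[y] A/𝔭 → A/𝔪 → 0`
gives `[A/𝔪] = 0`. -/

namespace G0

variable {R : Type u} [CommRing R]

theorem mk_eq_add_of_exact {M N P : Type u} [AddCommGroup M] [Module R M] [Module.Finite R M]
    [AddCommGroup N] [Module R N] [Module.Finite R N] [AddCommGroup P] [Module R P]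
    [Module.Finite R P] {f : M →ₗ[R] N} {g : N →ₗ[R] P} (hf : Function.Injective f)
    (hfg : Function.Exact f g) (hg : Function.Surjective g) :
    mk (FGMod.of R N) = mk (FGMod.of R M) + mk (FGMod.of R P) := by
  rw [← sub_eq_zero, sub_add_eq_sub_sub]
  exact (QuotientAddGroup.eq_zero_iff _).mpr <| AddSubgroup.subset_closure
    ⟨FGMod.of R M, FGMod.of R N, FGMod.of R P, f, g, hf, hg, (LinearMap.exact_iff.mp hfg).symm, rfl⟩

theorem mk_quotient_sup_span_singleton_eq_zero {I : Ideal R} {y : R}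
    (hy : IsSMulRegular (R ⧸ I) y) :
    mk (FGMod.of R (R ⧸ (I ⊔ Ideal.span {y}))) = 0 := by
  have hexact : Function.Exact (LinearMap.lsmul R (R ⧸ I) y)
      (Submodule.factor (le_sup_left : I ≤ I ⊔ Ideal.span {y})) := by
    intro x
    obtain ⟨r, rfl⟩ := Ideal.Quotient.mk_surjective x
    simp only [LinearMap.lsmul_apply, Set.mem_range]
    change Ideal.Quotient.mk _ r = 0 ↔ _
    rw [Ideal.Quotient.eq_zero_iff_mem, Submodule.mem_sup]
    constructor
    · rintro ⟨i, hi, j, hj, rfl⟩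
      obtain ⟨s, rfl⟩ := Ideal.mem_span_singleton'.mp hj
      refine ⟨Ideal.Quotient.mk I s, ?_⟩
      simp [Algebra.smul_def, Ideal.Quotient.eq_zero_iff_mem.mpr hi, mul_comm]
    · rintro ⟨z, hz⟩
      obtain ⟨s, rfl⟩ := Ideal.Quotient.mk_surjective z
      have hrs : r - s * y ∈ I := by
        rw [← Ideal.Quotient.eq, ← hz, Algebra.smul_def, mul_comm]
        rfl
      exact ⟨r - s * y, hrs, s * y, Ideal.mem_span_singleton'.mpr ⟨s, rfl⟩, sub_add_cancel _ _⟩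
  exact left_eq_add.mp
    (mk_eq_add_of_exact (f := LinearMap.lsmul R _ y) hy hexact (Submodule.factor_surjective _))

theorem mk_quotient_comap_span_singleton_eq_zero {S : Type*} [CommRing S] [IsDomain S]
    {φ : R →+* S} (hφ : Function.Surjective φ) {y : R} (hy : φ y ≠ 0) :
    mk (FGMod.of R (R ⧸ (Ideal.span {φ y}).comap φ)) = 0 := by
  have hreg : IsSMulRegular (R ⧸ RingHom.ker φ) y :=
    (isSMulRegular_quotient_iff_mem_of_smul_mem _ _).mpr fun _ hr =>
      ((RingHom.ker_isPrime φ).mem_or_mem hr).resolve_left hy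
  rw [← Set.image_singleton, ← Ideal.map_span, Ideal.comap_map_of_surjective' φ hφ, sup_comm]
  exact mk_quotient_sup_span_singleton_eq_zero hreg

end G0

namespace MvPolynomial

theorem polynomial_eval_aeval {k σ : Type*} [CommSemiring k] (w : σ → Polynomial k) (z : k) (g : MvPolynomial σ k) :
    (aeval w g).eval z = aeval (fun i => (w i).eval z) g := by
  simpa only [Polynomial.coe_aeval_eq_eval] using comp_aeval_apply w (Polynomial.aeval z) g

theorem comap_aeval_span_X {k σ : Type*} [Field k] (w : σ → Polynomial k) :
    (Ideal.span {Polynomial.X}).comap (aeval w) = vanishingIdeal k {fun i => (w i).eval 0} := by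
  ext g
  rw [Ideal.mem_comap, Ideal.mem_span_singleton, Polynomial.X_dvd_iff,
    Polynomial.coeff_zero_eq_eval_zero, polynomial_eval_aeval, mem_vanishingIdeal_singleton_iff]

end MvPolynomial

theorem aeval_sum_elim_X_mul_X_sub_rename {k ι S : Type*} [CommRing k] [CommRing S] [Algebra k S]
    (f : MvPolynomial ι k) (U V : S) (x : ι → S) :
    aeval (Sum.elim ![U, V] x) (X (.inl 0) * X (.inl 1) - rename .inr f) = U * V - aeval x f := by
  simp [aeval_rename]

theorem exists_curve_through_hypersurface_point {k ι : Type*} [Field k] [DecidableEq ι]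
    (f : MvPolynomial ι k) (j₀ : ι) (p : Fin 2 ⊕ ι → k)
    (hp : p (.inl 0) * p (.inl 1) = aeval (p ∘ .inr) f) :
    ∃ (w : Fin 2 ⊕ ι → Polynomial k) (y : MvPolynomial (Fin 2 ⊕ ι) k),
      aeval w (X (.inl 0) * X (.inl 1) - rename .inr f) = 0 ∧
      (fun i => (w i).eval 0) = p ∧ aeval w y = Polynomial.X := by
  -- With `(a, b, c) = p` and `ℓ(t) = c + t e_{j₀}`: the curve is `(a, f(ℓ(t))/a, ℓ(t))` if `a ≠ 0`,
  -- `(f(ℓ(t))/b, b, ℓ(t))` if `b ≠ 0`, and `(t, 0, c)` if `a = b = 0`.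
  let line : ι → Polynomial k := Function.update (fun j => Polynomial.C (p (.inr j))) j₀
    (Polynomial.C (p (.inr j₀)) + Polynomial.X)
  have hline : (fun j => (line j).eval 0) = p ∘ .inr := by
    ext j; by_cases h : j = j₀ <;> simp [line, h]
  have hline_X (U : Fin 2 → Polynomial k) :
      aeval (Sum.elim U line) (X (.inr j₀) - C (p (.inr j₀))) = Polynomial.X := by
    rw [map_sub, aeval_X, aeval_C, Sum.elim_inr, show line j₀ = _ from Function.update_self ..,
      Polynomial.algebraMap_eq, add_sub_cancel_left]
  let G := aeval line f
  have hG : G.eval 0 = p (.inl 0) * p (.inl 1) := by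
    simp only [G, polynomial_eval_aeval, hline, hp]
  by_cases ha : p (.inl 0) = 0
  · by_cases hb : p (.inl 1) = 0
    · refine ⟨Sum.elim ![Polynomial.X, 0] (fun j => Polynomial.C (p (.inr j))), X (.inl 0),
        ?_, ?_, ?_⟩
      · have hc : aeval (fun j => Polynomial.C (p (.inr j))) f =
            Polynomial.C (aeval (p ∘ .inr) f) :=
          (comp_aeval_apply _ (Algebra.ofId k _) f).symm
        rw [aeval_sum_elim_X_mul_X_sub_rename, hc, ← hp, ha, zero_mul, map_zero, mul_zero, sub_zero]
      · ext (i | j)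
        · fin_cases i <;> simp [ha, hb]
        · simp
      · simp
    · refine ⟨Sum.elim ![Polynomial.C (p (.inl 1))⁻¹ * G, Polynomial.C (p (.inl 1))] line,
        X (.inr j₀) - C (p (.inr j₀)), ?_, ?_, ?_⟩
      · rw [aeval_sum_elim_X_mul_X_sub_rename, mul_right_comm, ← Polynomial.C_mul, inv_mul_cancel₀ hb,
          Polynomial.C_1, one_mul, sub_self]
      · ext (i | j)
        · fin_cases i <;> simp [hG, ha]
        · exact congrFun hline j
      · exact hline_X _
  · refine ⟨Sum.elim ![Polynomial.C (p (.inl 0)), Polynomial.C (p (.inl 0))⁻¹ * G] line,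
      X (.inr j₀) - C (p (.inr j₀)), ?_, ?_, ?_⟩
    · rw [aeval_sum_elim_X_mul_X_sub_rename, ← mul_assoc, ← Polynomial.C_mul, mul_inv_cancel₀ ha,
        Polynomial.C_1, one_mul, sub_self]
    · ext (i | j)
      · fin_cases i <;> simp [hG, ha]
      · exact congrFun hline j
    · exact hline_X _

theorem G0.mk_hyperRing_quotient_eq_zero_of_curve {n : ℕ} {f : MvPolynomial (Fin n) ℂ}
    {m : Ideal (HyperRingF n f)} {w : Fin 2 ⊕ Fin n → Polynomial ℂ}
    (hw : aeval w (X (.inl 0) * X (.inl 1) - rename .inr f) = 0)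
    (hm : m.comap (Ideal.Quotient.mk _) = vanishingIdeal ℂ {fun i => (w i).eval 0})
    {y : MvPolynomial (Fin 2 ⊕ Fin n) ℂ} (hy : aeval w y = Polynomial.X) :
    G0.mk (FGMod.of (HyperRingF n f) (HyperRingF n f ⧸ m)) = 0 := by
  have hker : hyperIdealF n f ≤ RingHom.ker (aeval w) := by
    rwa [hyperIdealF, Ideal.span_singleton_le_iff_mem, RingHom.mem_ker]
  let φ : HyperRingF n f →ₐ[ℂ] Polynomial ℂ := Ideal.Quotient.liftₐ _ (aeval w) fun _ h => hker h
  have hφ (g : MvPolynomial (Fin 2 ⊕ Fin n) ℂ) : φ (Ideal.Quotient.mk _ g) = aeval w g :=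
    Ideal.Quotient.liftₐ_apply ..
  set t : HyperRingF n f := Ideal.Quotient.mk _ y
  have hφy : φ t = Polynomial.X := (hφ y).trans hy
  have hφ_surj : Function.Surjective φ := fun q => ⟨Polynomial.aeval t q, by
    rw [← Polynomial.aeval_algHom_apply φ t q, hφy, Polynomial.aeval_X_left_apply]⟩
  obtain rfl : m = (Ideal.span {φ t}).comap φ := by
    refine Ideal.comap_injective_of_surjective _ Ideal.Quotient.mk_surjective ?_
    ext g
    rw [hm, ← comap_aeval_span_X, hφy]
    simp only [Ideal.mem_comap, hφ]
  exact G0.mk_quotient_comap_span_singleton_eq_zero hφ_surj (hφy ▸ Polynomial.X_ne_zero)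

/-- **Residue fields vanish in the Grothendieck group.**
Let `A = ℂ[u,v,x₁,…,xₙ]/(uv - f(x₁,…,xₙ))` where `f` is a non-constant polynomial, and
let `𝔪` be any maximal ideal of `A`.  Then `[A/𝔪] = 0` in the Grothendieck group
`G₀(A)`. -/
theorem g0_class_residue_field_vanishes (n : ℕ) (f : MvPolynomial (Fin n) ℂ)
    (hf : ∀ c : ℂ, f ≠ C c) (m : Ideal (HyperRingF n f)) (hm : m.IsMaximal) :
    G0.mk (FGMod.of (HyperRingF n f) (HyperRingF n f ⧸ m)) = 0 := by
  obtain ⟨j₀⟩ : Nonempty (Fin n) := not_isEmpty_iff.mp fun _ => hf _ (eq_C_of_isEmpty f)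
  have hmax : (m.comap (Ideal.Quotient.mk (hyperIdealF n f))).IsMaximal :=
    Ideal.comap_isMaximal_of_surjective _ Ideal.Quotient.mk_surjective
  obtain ⟨p, hp⟩ := isMaximal_iff_eq_vanishingIdeal_singleton.mp hmax
  have hp_rel : p (.inl 0) * p (.inl 1) = aeval (p ∘ .inr) f := by
    have hmem : X (.inl 0) * X (.inl 1) - rename .inr f ∈ m.comap (Ideal.Quotient.mk _) := by
      rw [Ideal.mem_comap, (Ideal.Quotient.eq_zero_iff_mem (I := hyperIdealF n f)).mpr
        (Ideal.mem_span_singleton_self _)]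
      exact m.zero_mem
    rwa [hp, mem_vanishingIdeal_singleton_iff, map_sub, map_mul, aeval_X, aeval_X, aeval_rename,
      sub_eq_zero] at hmem
  obtain ⟨w, y, hw, rfl, hy⟩ := exists_curve_through_hypersurface_point f j₀ p hp_rel
  exact G0.mk_hyperRing_quotient_eq_zero_of_curve hw hp hy
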